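/- arXiv:0810.4675 — 2 statements merged into one kernel-verified Lean document; each statement's English description precedes it below -/
import Mathlib

section
/- Let L be a lattice (free ℤ-module of finite rank r+1) equipped with a nondegenerate symmetric bilinear form of signature (1, r), and let σ be an isometry of L. Suppose there is a nonzero vector v ∈ L ⊗ ℝ with σ(v) = λ v for a real number λ > 1. Then the eigenvalues of σ ⊗ ℂ are exactly λ, λ⁻¹, and r−1 further eigenvalues all of modulus 1; in particular λ is an algebraic integer all of whose conjugates other than λ and λ⁻¹ have modulus 1 (λ is a Salem number if moreover v can be chosen with ⟨v,v⟩ = 0). -/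
/-!
Extended to `ℂ`, the form becomes the Hermitian form `h(x, y) = x̄ᵀ M y`, still of signature
`(1, r)` and still preserved by `σ`. For eigenvectors `σ x = α x`, `σ y = β y` invariance gives
`h(x, y) = ᾱ β h(x, y)`, so `h(x, y) = 0` unless `ᾱ β = 1`. An eigenvector `w` for an eigenvalue
`μ ∉ {λ, λ⁻¹}` off the unit circle would therefore span, together with `v`, a totally isotropic
plane. In signature `(1, r)` there is none, since the form is negative definite on the vectors
with vanishing first coordinate; hence `w ∥ v` and `μ = λ`.
The eigenvalue `λ⁻¹` is carried by `M v`, because `σᵀ M σ = M` gives `σᵀ (M v) = λ⁻¹ M v`.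
Finally `λ` is a root of the monic integer polynomial `charpoly σ`, which the minimal polynomial of
`λ` divides.
-/

open Matrix Polynomial

namespace Matrix

variable {n : Type*} [Fintype n]

theorem isRoot_charpoly_iff_exists_mulVec_eq_smul [DecidableEq n] {R : Type*} [CommRing R]
    [IsDomain R] (A : Matrix n n R) (μ : R) :
    A.charpoly.IsRoot μ ↔ ∃ v ≠ 0, A *ᵥ v = μ • v := by
  rw [← charpoly_toLin', ← Module.End.hasEigenvalue_iff_isRoot_charpoly,
    Module.End.hasEigenvalue_iff, Submodule.ne_bot_iff]
  simp only [Module.End.mem_eigenspace_iff, toLin'_apply]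
  exact ⟨fun ⟨v, h, hv⟩ => ⟨v, hv, h⟩, fun ⟨v, hv, h⟩ => ⟨v, h, hv⟩⟩

theorem isRoot_charpoly_inv_of_transpose_mul_mul_eq [DecidableEq n] {K : Type*} [Field K]
    {S M : Matrix n n K} (hS : Sᵀ * M * S = M) (hM : M.det ≠ 0)
    {lam : K} {v : n → K} (hv : v ≠ 0) (heig : S *ᵥ v = lam • v) :
    S.charpoly.IsRoot lam⁻¹ := by
  have hMv : M *ᵥ v ≠ 0 := fun h => hM (exists_mulVec_eq_zero_iff.mp ⟨v, hv, h⟩)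
  have hscale : M *ᵥ v = lam • Sᵀ *ᵥ (M *ᵥ v) := by
    conv_lhs => rw [← hS]
    rw [← mulVec_mulVec, heig, mulVec_smul, mulVec_mulVec]
  have hlam : lam ≠ 0 := by
    rintro rfl
    exact hMv (by simpa using hscale)
  rw [← charpoly_transpose, isRoot_charpoly_iff_exists_mulVec_eq_smul]
  refine ⟨M *ᵥ v, hMv, ?_⟩
  calc Sᵀ *ᵥ (M *ᵥ v) = lam⁻¹ • lam • Sᵀ *ᵥ (M *ᵥ v) := by
        rw [smul_smul, inv_mul_cancel₀ hlam, one_smul]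
    _ = lam⁻¹ • (M *ᵥ v) := by rw [← hscale]

theorem map_transpose_mul_mul {R S : Type*} [CommSemiring R] [CommSemiring S] (f : R →+* S)
    (Q G P : Matrix n n R) :
    (Qᵀ * G * P).map f = (Q.map f)ᵀ * G.map f * P.map f := by
  rw [Matrix.map_mul, Matrix.map_mul, transpose_map]

theorem map_ofReal_transpose_mul_mul (Q G P : Matrix n n ℝ) :
    (Qᵀ * G * P).map ((↑) : ℝ → ℂ) = (Q.map (↑))ᴴ * G.map (↑) * P.map (↑) := by
  rw [← conjTranspose_eq_transpose_of_trivial,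
    ← conjTranspose_map _ fun x => (Complex.conj_ofReal x).symm,
    conjTranspose_eq_transpose_of_trivial]
  exact map_transpose_mul_mul Complex.ofRealHom Q G P

theorem map_mulVec_eq_smul {R S : Type*} [CommSemiring R] [CommSemiring S] (f : R →+* S)
    {A : Matrix n n R} {c : R} {v : n → R} (h : A *ᵥ v = c • v) :
    A.map f *ᵥ (f ∘ v) = f c • (f ∘ v) := by
  funext i
  simp [← RingHom.map_mulVec, h]

theorem star_mulVec_dotProduct_mulVec_mulVec {R : Type*} [CommSemiring R] [StarRing R]
    (G P : Matrix n n R) (x y : n → R) :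
    star (P *ᵥ x) ⬝ᵥ (G *ᵥ (P *ᵥ y)) = star x ⬝ᵥ ((Pᴴ * G * P) *ᵥ y) := by
  rw [star_mulVec, ← dotProduct_mulVec, mulVec_mulVec, mulVec_mulVec, Matrix.mul_assoc]

theorem star_dotProduct_mulVec_eq_zero_of_eigenvectors {K : Type*} [Field K] [StarRing K]
    {A G : Matrix n n K} (hA : Aᴴ * G * A = G) {α β : K} {x y : n → K}
    (hx : A *ᵥ x = α • x) (hy : A *ᵥ y = β • y) (hαβ : star α * β ≠ 1) :
    star x ⬝ᵥ (G *ᵥ y) = 0 := by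
  have h := star_mulVec_dotProduct_mulVec_mulVec G A x y
  rw [hA, hx, hy, star_smul, mulVec_smul, smul_dotProduct, dotProduct_smul, smul_eq_mul,
    smul_eq_mul, ← mul_assoc] at h
  have h1 : (1 - star α * β) * (star x ⬝ᵥ (G *ᵥ y)) = 0 := by linear_combination -h
  exact (mul_eq_zero.mp h1).resolve_left (sub_ne_zero.mpr (Ne.symm hαβ))

end Matrix

def lorentzDiagonal (R : Type*) [Ring R] (r : ℕ) : Matrix (Fin (r + 1)) (Fin (r + 1)) R :=
  diagonal fun i => if i = 0 then 1 else -1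

theorem lorentzDiagonal_map {R S : Type*} [Ring R] [Ring S] (f : R →+* S) (r : ℕ) :
    (lorentzDiagonal R r).map f = lorentzDiagonal S r := by
  simp [lorentzDiagonal, diagonal_map, apply_ite f]

theorem det_lorentzDiagonal (R : Type*) [CommRing R] (r : ℕ) :
    (lorentzDiagonal R r).det = (-1) ^ r := by
  simp [lorentzDiagonal, det_diagonal, Fin.prod_univ_succ, Fin.succ_ne_zero]

theorem det_ne_zero_of_transpose_mul_mul_eq_lorentzDiagonal {R : Type*} [CommRing R]
    [Nontrivial R] {r : ℕ} {G P : Matrix (Fin (r + 1)) (Fin (r + 1)) R}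
    (h : Pᵀ * G * P = lorentzDiagonal R r) : G.det ≠ 0 := by
  intro hG
  have hdet := congrArg det h
  rw [det_mul, det_mul, hG, mul_zero, zero_mul, det_lorentzDiagonal] at hdet
  exact (isUnit_neg_one.pow r).ne_zero hdet.symm

theorem eq_zero_of_lorentzDiagonal_isotropic {r : ℕ} {x : Fin (r + 1) → ℂ} (hx0 : x 0 = 0)
    (hx : star x ⬝ᵥ (lorentzDiagonal ℂ r *ᵥ x) = 0) : x = 0 := by
  have hterm : ∀ i, star x i * ((if i = 0 then 1 else -1) * x i) = -((‖x i‖ ^ 2 : ℝ) : ℂ) := by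
    intro i
    rcases eq_or_ne i 0 with rfl | hi
    · simp [hx0]
    · simp [hi, Complex.conj_mul']
  simp only [lorentzDiagonal, mulVec_diagonal, dotProduct, hterm, Finset.sum_neg_distrib,
    neg_eq_zero] at hx
  have hsum : ∑ i, ‖x i‖ ^ 2 = 0 := by exact_mod_cast hx
  funext i
  simpa using (Finset.sum_eq_zero_iff_of_nonneg fun j _ => sq_nonneg ‖x j‖).mp hsum i
    (Finset.mem_univ i)

theorem exists_eq_smul_of_lorentzDiagonal_isotropic_pair {r : ℕ} {a b : Fin (r + 1) → ℂ}
    (ha : a ≠ 0)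
    (haa : star a ⬝ᵥ (lorentzDiagonal ℂ r *ᵥ a) = 0)
    (hab : star a ⬝ᵥ (lorentzDiagonal ℂ r *ᵥ b) = 0)
    (hba : star b ⬝ᵥ (lorentzDiagonal ℂ r *ᵥ a) = 0)
    (hbb : star b ⬝ᵥ (lorentzDiagonal ℂ r *ᵥ b) = 0) :
    ∃ t : ℂ, b = t • a := by
  have ha0 : a 0 ≠ 0 := fun h => ha (eq_zero_of_lorentzDiagonal_isotropic h haa)
  set c := b 0 • a - a 0 • b with hc
  have hc0 : c 0 = 0 := by simp [hc, mul_comm]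
  have hcc : star c ⬝ᵥ (lorentzDiagonal ℂ r *ᵥ c) = 0 := by
    simp only [hc, star_sub, star_smul, mulVec_sub, mulVec_smul, sub_dotProduct, dotProduct_sub,
      smul_dotProduct, dotProduct_smul, haa, hab, hba, hbb, smul_zero, sub_zero]
  have hc_eq := eq_zero_of_lorentzDiagonal_isotropic hc0 hcc
  rw [hc, sub_eq_zero] at hc_eq
  refine ⟨(a 0)⁻¹ * b 0, ?_⟩
  rw [mul_smul, hc_eq, smul_smul, inv_mul_cancel₀ ha0, one_smul]

theorem exists_eq_smul_of_isotropic_pair {r : ℕ} {G P : Matrix (Fin (r + 1)) (Fin (r + 1)) ℂ}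
    (hP : IsUnit P.det) (hPG : Pᴴ * G * P = lorentzDiagonal ℂ r) {x y : Fin (r + 1) → ℂ}
    (hx : x ≠ 0) (hxx : star x ⬝ᵥ (G *ᵥ x) = 0) (hxy : star x ⬝ᵥ (G *ᵥ y) = 0)
    (hyx : star y ⬝ᵥ (G *ᵥ x) = 0) (hyy : star y ⬝ᵥ (G *ᵥ y) = 0) :
    ∃ t : ℂ, y = t • x := by
  have hP' : ∀ z, P *ᵥ (P⁻¹ *ᵥ z) = z := fun z => by
    rw [mulVec_mulVec, mul_nonsing_inv _ hP, one_mulVec]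
  have hform : ∀ z w, star (P⁻¹ *ᵥ z) ⬝ᵥ (lorentzDiagonal ℂ r *ᵥ (P⁻¹ *ᵥ w)) =
      star z ⬝ᵥ (G *ᵥ w) := fun z w => by
    rw [← hPG, ← star_mulVec_dotProduct_mulVec_mulVec, hP', hP']
  obtain ⟨t, ht⟩ := exists_eq_smul_of_lorentzDiagonal_isotropic_pair
    (fun h => hx (by rw [← hP' x, h, mulVec_zero])) ((hform x x).trans hxx)
    ((hform x y).trans hxy) ((hform y x).trans hyx) ((hform y y).trans hyy)
  exact ⟨t, by rw [← hP' y, ht, mulVec_smul, hP']⟩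

theorem norm_eq_one_of_isRoot_charpoly {r : ℕ} {A G P : Matrix (Fin (r + 1)) (Fin (r + 1)) ℂ}
    (hP : IsUnit P.det) (hPG : Pᴴ * G * P = lorentzDiagonal ℂ r) (hA : Aᴴ * G * A = G)
    {lam : ℂ} (hlam : ‖lam‖ ≠ 1) {v : Fin (r + 1) → ℂ} (hv : v ≠ 0) (heig : A *ᵥ v = lam • v)
    {μ : ℂ} (hμ : A.charpoly.IsRoot μ) (hμlam : μ ≠ lam) (hμlam' : μ ≠ (star lam)⁻¹) :
    ‖μ‖ = 1 := by
  by_contra hμ1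
  obtain ⟨w, hw, hAw⟩ := (isRoot_charpoly_iff_exists_mulVec_eq_smul A μ).mp hμ
  have hoff : ∀ z : ℂ, ‖z‖ ≠ 1 → star z * z ≠ 1 := fun z hz h => hz <| by
    rw [Complex.star_def, Complex.conj_mul'] at h
    exact (pow_eq_one_iff_of_nonneg (norm_nonneg z) two_ne_zero).mp (by exact_mod_cast h)
  have hvw : star lam * μ ≠ 1 := fun h => hμlam' (eq_inv_of_mul_eq_one_right h)
  have hwv : star μ * lam ≠ 1 := fun h => hvw (by simpa [star_mul] using congrArg star h)
  obtain ⟨t, rfl⟩ := exists_eq_smul_of_isotropic_pair hP hPG hv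
    (star_dotProduct_mulVec_eq_zero_of_eigenvectors hA heig heig (hoff lam hlam))
    (star_dotProduct_mulVec_eq_zero_of_eigenvectors hA heig hAw hvw)
    (star_dotProduct_mulVec_eq_zero_of_eigenvectors hA hAw heig hwv)
    (star_dotProduct_mulVec_eq_zero_of_eigenvectors hA hAw hAw (hoff μ hμ1))
  refine hμlam (smul_left_injective ℂ hw ?_)
  simp only [← hAw, mulVec_smul, heig, smul_comm t lam v]

theorem norm_eq_one_of_isRoot_charpoly_map_ofReal {r : ℕ}
    {A G P : Matrix (Fin (r + 1)) (Fin (r + 1)) ℝ} (hP : IsUnit P.det)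
    (hPG : Pᵀ * G * P = lorentzDiagonal ℝ r) (hA : Aᵀ * G * A = G)
    {lam : ℝ} (hlam : 1 < lam) {v : Fin (r + 1) → ℝ} (hv : v ≠ 0) (heig : A *ᵥ v = lam • v)
    {μ : ℂ} (hμ : (A.map (↑)).charpoly.IsRoot μ) (hμlam : μ ≠ lam)
    (hμlam' : μ ≠ ((lam⁻¹ : ℝ) : ℂ)) :
    ‖μ‖ = 1 := by
  have hPC : IsUnit (P.map ((↑) : ℝ → ℂ)).det :=
    RingHom.map_det Complex.ofRealHom P ▸ hP.map Complex.ofRealHom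
  have hPGC : (P.map (↑))ᴴ * G.map (↑) * P.map (↑) = lorentzDiagonal ℂ r := by
    rw [← map_ofReal_transpose_mul_mul, hPG]
    exact lorentzDiagonal_map Complex.ofRealHom r
  have hAC : (A.map (↑))ᴴ * G.map (↑) * A.map (↑) = G.map ((↑) : ℝ → ℂ) := by
    rw [← map_ofReal_transpose_mul_mul, hA]
  have hlamC : ‖(lam : ℂ)‖ ≠ 1 := by
    rw [Complex.norm_of_nonneg (by linarith)]
    exact hlam.ne'
  have hvC : ((↑) : ℝ → ℂ) ∘ v ≠ 0 := by simpa [funext_iff] using hv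
  exact norm_eq_one_of_isRoot_charpoly hPC hPGC hAC hlamC hvC
    (map_mulVec_eq_smul Complex.ofRealHom heig) hμ hμlam (by simpa using hμlam')

theorem isRoot_map_of_isRoot_minpoly_map {K A L : Type*} [Field K] [Ring A] [Algebra K A]
    [CommRing L] [Algebra K L] {x : A} {p : K[X]} (hp : aeval x p = 0) {μ : L}
    (hμ : ((minpoly K x).map (algebraMap K L)).IsRoot μ) : (p.map (algebraMap K L)).IsRoot μ :=
  hμ.dvd (Polynomial.map_dvd (algebraMap K L) (minpoly.dvd K x hp))

theorem signature_one_r_isometry_eigenvalues_general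
    {r : ℕ} (M S : Matrix (Fin (r + 1)) (Fin (r + 1)) ℤ)
    (hsig : ∃ P : Matrix (Fin (r + 1)) (Fin (r + 1)) ℝ, IsUnit P.det ∧
      P.transpose * (M.map (Int.cast : ℤ → ℝ)) * P =
        Matrix.diagonal (fun i => if i = 0 then (1 : ℝ) else -1))
    (hSisom : S.transpose * M * S = M)
    (lam : ℝ) (hlam : 1 < lam)
    (v : Fin (r + 1) → ℝ) (hv : v ≠ 0)
    (heig : (S.map (Int.cast : ℤ → ℝ)).mulVec v = lam • v) :
    (S.map (Int.cast : ℤ → ℂ)).charpoly.IsRoot (lam : ℂ) ∧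
    (S.map (Int.cast : ℤ → ℂ)).charpoly.IsRoot ((lam⁻¹ : ℝ) : ℂ) ∧
    (∀ μ : ℂ, (S.map (Int.cast : ℤ → ℂ)).charpoly.IsRoot μ →
      μ ≠ (lam : ℂ) → μ ≠ ((lam⁻¹ : ℝ) : ℂ) → ‖μ‖ = 1) ∧
    IsIntegral ℤ lam ∧
    (∀ μ : ℂ, ((minpoly ℚ lam).map (algebraMap ℚ ℂ)).IsRoot μ →
      μ ≠ (lam : ℂ) → μ ≠ ((lam⁻¹ : ℝ) : ℂ) → ‖μ‖ = 1) := by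
  obtain ⟨P, hP, hPM⟩ := hsig
  set Sr := S.map (Int.cast : ℤ → ℝ)
  have hSr : Srᵀ * M.map (↑) * Sr = M.map (↑) := by
    simpa [hSisom] using (map_transpose_mul_mul (Int.castRingHom ℝ) S M S).symm
  have hC : S.map (Int.cast : ℤ → ℂ) = Sr.map (↑) := by
    simp [Sr, Matrix.map_map, Function.comp_def]
  have hCp : (S.map (Int.cast : ℤ → ℂ)).charpoly = Sr.charpoly.map Complex.ofRealHom := by
    rw [hC, ← charpoly_map]
    rfl
  have hroot : Sr.charpoly.IsRoot lam :=
    (isRoot_charpoly_iff_exists_mulVec_eq_smul Sr lam).2 ⟨v, hv, heig⟩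
  have hroot_inv : Sr.charpoly.IsRoot lam⁻¹ := isRoot_charpoly_inv_of_transpose_mul_mul_eq hSr
    (det_ne_zero_of_transpose_mul_mul_eq_lorentzDiagonal hPM) hv heig
  have hunit : ∀ μ : ℂ, (S.map (Int.cast : ℤ → ℂ)).charpoly.IsRoot μ →
      μ ≠ (lam : ℂ) → μ ≠ ((lam⁻¹ : ℝ) : ℂ) → ‖μ‖ = 1 := fun μ hμ =>
    norm_eq_one_of_isRoot_charpoly_map_ofReal hP hPM hSr hlam hv heig (hC ▸ hμ)
  have haeval : aeval lam S.charpoly = 0 := by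
    rw [← eval_map_algebraMap, algebraMap_int_eq, ← charpoly_map]
    exact hroot
  refine ⟨hCp ▸ hroot.map, hCp ▸ hroot_inv.map, hunit, ⟨S.charpoly, S.charpoly_monic, haeval⟩,
    fun μ hμ => hunit μ ?_⟩
  have hμ' := isRoot_map_of_isRoot_minpoly_map (p := S.charpoly.map (algebraMap ℤ ℚ))
    (by rwa [aeval_map_algebraMap]) hμ
  rwa [Polynomial.map_map, ← IsScalarTower.algebraMap_eq, algebraMap_int_eq,
    ← charpoly_map] at hμ'

/-- an isometry of an integral lattice of signature (1,r) with a real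
eigenvalue λ > 1 (with eigenvector in L ⊗ ℝ) has eigenvalues λ, λ⁻¹ and r−1 further
eigenvalues of modulus 1; in particular λ is an algebraic integer all of whose conjugates
other than λ and λ⁻¹ have modulus 1. -/
theorem signature_one_r_isometry_eigenvalues
    {r : ℕ} (M S : Matrix (Fin (r + 1)) (Fin (r + 1)) ℤ)
    (hMsym : M.transpose = M)
    (hsig : ∃ P : Matrix (Fin (r + 1)) (Fin (r + 1)) ℝ, IsUnit P.det ∧
      P.transpose * (M.map (Int.cast : ℤ → ℝ)) * P =
        Matrix.diagonal (fun i => if i = 0 then (1 : ℝ) else -1))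
    (hSisom : S.transpose * M * S = M) (hSunit : IsUnit S.det)
    (lam : ℝ) (hlam : 1 < lam)
    (v : Fin (r + 1) → ℝ) (hv : v ≠ 0)
    (heig : (S.map (Int.cast : ℤ → ℝ)).mulVec v = lam • v) :
    (S.map (Int.cast : ℤ → ℂ)).charpoly.IsRoot (lam : ℂ) ∧
    (S.map (Int.cast : ℤ → ℂ)).charpoly.IsRoot ((lam⁻¹ : ℝ) : ℂ) ∧
    (∀ μ : ℂ, (S.map (Int.cast : ℤ → ℂ)).charpoly.IsRoot μ →
      μ ≠ (lam : ℂ) → μ ≠ ((lam⁻¹ : ℝ) : ℂ) → ‖μ‖ = 1) ∧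
    IsIntegral ℤ lam ∧
    (∀ μ : ℂ, ((minpoly ℚ lam).map (algebraMap ℚ ℂ)).IsRoot μ →
      μ ≠ (lam : ℂ) → μ ≠ ((lam⁻¹ : ℝ) : ℂ) → ‖μ‖ = 1) :=
  signature_one_r_isometry_eigenvalues_general M S hsig hSisom lam hlam v hv heig
end

section
/- Let X be a smooth projective complex variety of dimension n, g an automorphism, and suppose there exist nonzero classes v₁, …, v_s in the nef cone of X with g* v_i = λ_i v_i for pairwise distinct real scalars λ_i > 1, and with the property that any product of at most n of the v_i is nonzero in cohomology. Then s ≤ n − 1. -/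
/-- if nonzero nef classes v₁,…,v_s in the cohomology ring of a smooth
projective n-fold are eigenvectors of g* with pairwise distinct eigenvalues λ_i > 1,
products of at most n of them are nonzero, and g* fixes products of n classes (top degree),
then s ≤ n − 1. -/
theorem nef_eigenvectors_bound {R : Type*} [CommRing R] [Algebra ℝ R]
    {n s : ℕ} (hn : 0 < n)
    (g : R ≃ₐ[ℝ] R) (v : Fin s → R) (lam : Fin s → ℝ)
    (hv : ∀ i, v i ≠ 0)
    (heig : ∀ i, g (v i) = lam i • v i)
    (hgt : ∀ i, 1 < lam i)
    (hdist : Function.Injective lam)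
    (hprod : ∀ t : Finset (Fin s), t.card ≤ n → ∏ i ∈ t, v i ≠ 0)
    (htop : ∀ t : Finset (Fin s), t.card = n → g (∏ i ∈ t, v i) = ∏ i ∈ t, v i) :
    s ≤ n - 1 := by
  by_contra h
  push_neg at h
  have hns : n ≤ s := by omega
  have key : ∀ w : Finset (Fin s), w.Nonempty → 1 < ∏ i ∈ w, lam i := by
    intro w hw
    induction hw using Finset.Nonempty.cons_induction with
    | singleton i => simpa using hgt i
    | cons i w hi hw ih =>
      rw [Finset.prod_cons]
      nlinarith [hgt i, ih]
  obtain ⟨t, _, ht⟩ := Finset.exists_subset_card_eq (by simpa using hns :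
    n ≤ (Finset.univ : Finset (Fin s)).card)
  set u := ∏ i ∈ t, v i with hu
  have h1 : g u = (∏ i ∈ t, lam i) • u := by
    rw [hu, map_prod, Finset.prod_congr rfl (fun i _ => heig i)]
    simp [Algebra.smul_def, Finset.prod_mul_distrib, map_prod]
  have hfix : g u = u := htop t ht
  set c := ∏ i ∈ t, lam i with hc
  have hne : t.Nonempty := Finset.card_pos.mp (ht ▸ hn)
  have hc1 : 1 < c := key t hne
  have hz : (c - 1) • u = 0 := by
    rw [sub_smul, one_smul, ← h1, hfix, sub_self]
  have hcne : c - 1 ≠ 0 := by linarith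
  have : u = 0 := by
    have := congrArg (fun x => (c - 1)⁻¹ • x) hz
    simpa [smul_smul, inv_mul_cancel₀ hcne] using this
  exact hprod t (le_of_eq ht) this
end
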